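/- arXiv:2005.04598 — 5 statements merged into one kernel-verified Lean document; each statement's English description precedes it below -/
import Mathlib

section
/- Every family of sets {X_j}_{j∈J} with |X_j| ≤ ℓ for all j ∈ J and |J| ≥ ℓ!·p^(ℓ+1) contains a Δ-system K with |K| = p, where a Δ-system is a collection of sets such that any two distinct sets in the collection have the same pairwise intersection. -/
/-!
Induction on `ℓ`. Take a maximal pairwise disjoint subfamily `M`. If it has `p` members it is
a Δ-system with empty kernel. Otherwise every other set meets the union `Y` of `M`, which has
at most `ℓ (p - 1)` points, so by pigeonhole some point `a ∈ Y` lies in at least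
`(ℓ - 1)! p^ℓ` of the sets. Removing `a` from those sets and applying the induction hypothesis
gives a Δ-system whose kernel, with `a` put back, is the kernel we want.
-/

open Finset Nat

variable {ι α : Type*}

def IsDeltaSystem [DecidableEq α] (X : ι → Finset α) (K : Finset ι) : Prop :=
  ∃ D : Finset α, ∀ i ∈ K, ∀ j ∈ K, i ≠ j → X i ∩ X j = D

namespace IsDeltaSystem

variable [DecidableEq α] {X : ι → Finset α} {K : Finset ι}

theorem of_pairwiseDisjoint (h : (K : Set ι).PairwiseDisjoint X) : IsDeltaSystem X K :=
  ⟨∅, fun _ hi _ hj hij => disjoint_iff_inter_eq_empty.mp (h hi hj hij)⟩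

theorem of_erase {a : α} (ha : ∀ j ∈ K, a ∈ X j)
    (h : IsDeltaSystem (fun j => (X j).erase a) K) : IsDeltaSystem X K := by
  obtain ⟨D, hD⟩ := h
  refine ⟨insert a D, fun i hi j hj hij => ?_⟩
  rw [← hD i hi j hj hij, erase_inter, inter_erase, erase_idem,
    insert_erase (mem_inter.2 ⟨ha i hi, ha j hj⟩)]

end IsDeltaSystem

theorem Finset.exists_maximal_pairwiseDisjoint {β : Type*} [PartialOrder β] [OrderBot β]
    [DecidableEq ι] (J : Finset ι) (X : ι → β) :
    ∃ M ⊆ J, (M : Set ι).PairwiseDisjoint X ∧ ∀ j ∈ J \ M, ∃ i ∈ M, ¬Disjoint (X i) (X j) := by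
  classical
  obtain ⟨M, hM, hmax⟩ := exists_max_image
    (J.powerset.filter fun M : Finset ι => (M : Set ι).PairwiseDisjoint X) card ⟨∅, by simp⟩
  rw [mem_filter, mem_powerset] at hM
  refine ⟨M, hM.1, hM.2, fun j hj => ?_⟩
  obtain ⟨hjJ, hjM⟩ := mem_sdiff.1 hj
  by_contra! hdisj
  have hins : insert j M ∈ J.powerset.filter fun M : Finset ι => (M : Set ι).PairwiseDisjoint X := by
    rw [mem_filter, mem_powerset, coe_insert]
    exact ⟨insert_subset hjJ hM.1,
      hM.2.insert fun i hi _ => (hdisj i hi).symm⟩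
  have := hmax _ hins
  rw [card_insert_of_notMem hjM] at this
  omega

theorem Finset.exists_lt_card_filter_mem_of_mul_lt_card [DecidableEq α] {S : Finset ι}
    {Y : Finset α} {X : ι → Finset α} {n : ℕ} (hS : ∀ j ∈ S, ∃ a ∈ Y, a ∈ X j)
    (hn : #Y * n < #S) : ∃ a ∈ Y, n < #{j ∈ S | a ∈ X j} := by
  classical
  by_contra! h
  have hcover : S ⊆ Y.biUnion fun a => {j ∈ S | a ∈ X j} := fun j hj => by
    obtain ⟨a, ha, hja⟩ := hS j hj
    exact mem_biUnion.2 ⟨a, ha, mem_filter.2 ⟨hj, hja⟩⟩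
  have := (card_le_card hcover).trans (card_biUnion_le.trans (sum_le_card_nsmul _ _ _ h))
  rw [smul_eq_mul] at this
  omega

theorem Finset.exists_pairwiseDisjoint_or_exists_lt_card_filter_mem [DecidableEq ι]
    [DecidableEq α] {J : Finset ι} {X : ι → Finset α} {k n p : ℕ}
    (hX : ∀ j ∈ J, #(X j) ≤ k) (hJ : (k * n + 1) * p ≤ #J) :
    (∃ K ⊆ J, #K = p ∧ (K : Set ι).PairwiseDisjoint X) ∨ ∃ a, n < #{j ∈ J | a ∈ X j} := by
  obtain ⟨M, hMJ, hMdisj, hMmax⟩ := J.exists_maximal_pairwiseDisjoint X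
  by_cases hp : p ≤ #M
  · obtain ⟨K, hKM, hK⟩ := exists_subset_card_eq hp
    exact .inl ⟨K, hKM.trans hMJ, hK, hMdisj.subset (coe_subset.2 hKM)⟩
  right
  have hcover : ∀ j ∈ J \ M, ∃ a ∈ M.biUnion X, a ∈ X j := fun j hj => by
    obtain ⟨i, hi, hij⟩ := hMmax j hj
    obtain ⟨a, hai, haj⟩ := not_disjoint_iff.1 hij
    exact ⟨a, mem_biUnion.2 ⟨i, hi, hai⟩, haj⟩
  have hY : #(M.biUnion X) ≤ #M * k :=
    card_biUnion_le.trans (sum_le_card_nsmul _ _ _ fun i hi => hX i (hMJ hi))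
  have hn : #(M.biUnion X) * n < #(J \ M) := by
    have hJM := card_le_card_sdiff_add_card (s := J) (t := M)
    have : (k * n + 1) * #M < (k * n + 1) * p := Nat.mul_lt_mul_of_pos_left (by omega) (by omega)
    nlinarith [Nat.mul_le_mul_right n hY]
  obtain ⟨a, -, ha⟩ := exists_lt_card_filter_mem_of_mul_lt_card hcover hn
  exact ⟨a, ha.trans_le (card_le_card (filter_subset_filter _ sdiff_subset))⟩

/-- Δ-system (sunflower) lemma: every family of sets of size at most `ℓ` indexed by a
set of size at least `ℓ! · p^(ℓ+1)` contains a Δ-system of size `p`: a subfamily in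
which any two distinct members have the same pairwise intersection. -/
theorem delta_system_lemma {ι α : Type} [DecidableEq α]
    (J : Finset ι) (X : ι → Finset α) (ℓ p : ℕ)
    (hX : ∀ j ∈ J, (X j).card ≤ ℓ)
    (hJ : ℓ.factorial * p ^ (ℓ + 1) ≤ J.card) :
    ∃ K ⊆ J, K.card = p ∧
      ∃ D : Finset α, ∀ i ∈ K, ∀ j ∈ K, i ≠ j → X i ∩ X j = D := by
  classical
  induction ℓ generalizing J X with
  | zero =>
    obtain ⟨K, hKJ, hK⟩ := exists_subset_card_eq (by simpa using hJ)
    refine ⟨K, hKJ, hK, IsDeltaSystem.of_pairwiseDisjoint fun i hi _ _ _ => ?_⟩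
    rw [Function.onFun, card_eq_zero.1 (Nat.le_zero.1 (hX i (hKJ hi)))]
    exact disjoint_bot_left
  | succ ℓ ih =>
    set N := ℓ ! * p ^ (ℓ + 1)
    have hbound : ((ℓ + 1) * (N - 1) + 1) * p ≤ #J := by
      rcases p.eq_zero_or_pos with rfl | hp
      · simp
      have hN : 0 < N := by positivity
      calc ((ℓ + 1) * (N - 1) + 1) * p ≤ (ℓ + 1) * N * p := by
            have := Nat.le_mul_of_pos_right (ℓ + 1) hN
            gcongr; rw [Nat.mul_sub_one]; omega
        _ = (ℓ + 1)! * p ^ (ℓ + 1 + 1) := by rw [factorial_succ]; ring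
        _ ≤ #J := hJ
    rcases exists_pairwiseDisjoint_or_exists_lt_card_filter_mem hX hbound with
      ⟨K, hKJ, hK, hdisj⟩ | ⟨a, ha⟩
    · exact ⟨K, hKJ, hK, IsDeltaSystem.of_pairwiseDisjoint hdisj⟩
    have hX' : ∀ j ∈ {j ∈ J | a ∈ X j}, #((X j).erase a) ≤ ℓ := fun j hj => by
      rw [card_erase_of_mem (mem_filter.1 hj).2]
      have := hX j (mem_filter.1 hj).1
      omega
    obtain ⟨K, hKT, hK, hΔ⟩ := ih _ _ hX' (by omega)
    exact ⟨K, hKT.trans (filter_subset _ _), hK,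
      IsDeltaSystem.of_erase (fun j hj => (mem_filter.1 (hKT hj)).2) hΔ⟩
end

section
/- Let A be a finite set of atoms partitioned into colours C, let Aut be the group of colour-preserving permutations of A, and let Q be an object (element of the hereditarily finite sets over A, or more generally any set on which Aut acts compatibly). If X₁ and X₂ are both supports of Q (i.e., every automorphism fixing X₁ pointwise fixes Q, and similarly for X₂), and for every colour c ∈ C the set (A \ (X₁ ∪ X₂)) ∩ c is nonempty, then X₁ ∩ X₂ is also a support of Q. -/
open scoped Classical

/-!
A colour-preserving permutation fixing `Y` pointwise is a product of transpositions of
same-coloured atoms outside `Y`, so `Y` supports `Q` as soon as all those transpositions fix `Q`.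
For `Y = X₁ ∩ X₂`, pick a spare atom `c` of the right colour outside `X₁ ∪ X₂`: every atom `x`
outside `X₁ ∩ X₂` lies outside `X₁` or outside `X₂` together with `c`, so `swap x c` fixes `Q`,
and `swap a b` is a product of `swap a c` and `swap c b`.
-/

open Equiv MulAction

section IsSupport

variable {α κ β : Type*} [MulAction (Perm α) β]

def IsSupport (col : α → κ) (X : Set α) (Q : β) : Prop :=
  ∀ π : Perm α, (∀ a, col (π a) = col a) → (∀ a ∈ X, π a = a) → π • Q = Q

variable [DecidableEq α] {col : α → κ}

theorem colour_swap_apply {a b : α} (hab : col a = col b) (x : α) :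
    col (swap a b x) = col x := by
  rw [swap_apply_def]
  split_ifs with hxa hxb
  · rw [hxa, hab]
  · rw [hxb, hab]
  · rfl

theorem IsSupport.swap_mem_stabilizer {X : Set α} {Q : β} (hX : IsSupport col X Q) {a b : α}
    (hab : col a = col b) (ha : a ∉ X) (hb : b ∉ X) : swap a b ∈ stabilizer (Perm α) Q :=
  hX _ (colour_swap_apply hab) fun _ hx ↦
    swap_apply_of_ne_of_ne (ne_of_mem_of_not_mem hx ha) (ne_of_mem_of_not_mem hx hb)

theorem isSupport_of_forall_swap_mem_stabilizer [Finite α] {Y : Set α} {Q : β}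
    (hswap : ∀ a b, col a = col b → a ∉ Y → b ∉ Y → swap a b ∈ stabilizer (Perm α) Q) :
    IsSupport col Y Q := by
  set S : Set (Perm α) := {σ | ∃ a b, a ≠ b ∧ col a = col b ∧ a ∉ Y ∧ b ∉ Y ∧ σ = swap a b}
  have hS : ∀ σ ∈ S, σ.IsSwap := by
    rintro σ ⟨a, b, hne, -, -, -, rfl⟩
    exact ⟨a, b, hne, rfl⟩
  have closure_le_stabilizer : Subgroup.closure S ≤ stabilizer (Perm α) Q := by
    rw [Subgroup.closure_le]
    rintro σ ⟨a, b, -, hab, ha, hb, rfl⟩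
    exact hswap a b hab ha hb
  intro π hπcol hπfix
  refine closure_le_stabilizer ((mem_closure_isSwap hS).2 ⟨Set.toFinite _, fun x ↦ ?_⟩)
  by_cases hx : π x = x
  · rw [hx]
    exact mem_orbit_self x
  have hxY : x ∉ Y := fun h ↦ hx (hπfix x h)
  have hπxY : π x ∉ Y := fun h ↦ hx (π.injective (hπfix _ h))
  exact ⟨⟨swap (π x) x, Subgroup.subset_closure ⟨π x, x, hx, hπcol x, hπxY, hxY, rfl⟩⟩,
    swap_apply_right (π x) x⟩

theorem IsSupport.inter [Finite α] {X₁ X₂ : Set α} {Q : β}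
    (h₁ : IsSupport col X₁ Q) (h₂ : IsSupport col X₂ Q)
    (hcol : ∀ c ∈ Set.range col, ∃ a, a ∉ X₁ ∪ X₂ ∧ col a = c) :
    IsSupport col (X₁ ∩ X₂) Q := by
  refine isSupport_of_forall_swap_mem_stabilizer fun a b hab ha hb ↦ ?_
  obtain ⟨c, hc, hca⟩ := hcol (col a) ⟨a, rfl⟩
  rw [Set.mem_union, not_or] at hc
  have swap_spare : ∀ x, col x = col a → x ∉ X₁ ∩ X₂ → swap x c ∈ stabilizer (Perm α) Q := by
    intro x hx hxX
    by_cases hx₁ : x ∈ X₁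
    · exact h₂.swap_mem_stabilizer (hx.trans hca.symm) (fun hx₂ ↦ hxX ⟨hx₁, hx₂⟩) hc.2
    · exact h₁.swap_mem_stabilizer (hx.trans hca.symm) hx₁ hc.1
  exact SubmonoidClass.swap_mem_trans _ (swap_spare a rfl ha)
    (swap_comm b c ▸ swap_spare b hab.symm hb)

end IsSupport

theorem support_intersection_general {α κ β : Type} [Fintype α]
    [MulAction (Equiv.Perm α) β]
    (col : α → κ) (Q : β) (X₁ X₂ : Set α)
    (h₁ : ∀ π : Equiv.Perm α, (∀ a, col (π a) = col a) →
      (∀ a ∈ X₁, π a = a) → π • Q = Q)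
    (h₂ : ∀ π : Equiv.Perm α, (∀ a, col (π a) = col a) →
      (∀ a ∈ X₂, π a = a) → π • Q = Q)
    (hcol : ∀ c ∈ Set.range col, ∃ a, a ∉ X₁ ∪ X₂ ∧ col a = c) :
    ∀ π : Equiv.Perm α, (∀ a, col (π a) = col a) →
      (∀ a ∈ X₁ ∩ X₂, π a = a) → π • Q = Q :=
  IsSupport.inter h₁ h₂ hcol

/-- If `X₁` and `X₂` both support an object `Q` (every colour-preserving permutation of
the finite atom set fixing the support pointwise fixes `Q`), and every colour still has
an atom outside `X₁ ∪ X₂`, then `X₁ ∩ X₂` also supports `Q`. -/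
theorem support_intersection {α κ β : Type} [Fintype α] [DecidableEq α]
    [MulAction (Equiv.Perm α) β]
    (col : α → κ) (Q : β) (X₁ X₂ : Set α)
    (h₁ : ∀ π : Equiv.Perm α, (∀ a, col (π a) = col a) →
      (∀ a ∈ X₁, π a = a) → π • Q = Q)
    (h₂ : ∀ π : Equiv.Perm α, (∀ a, col (π a) = col a) →
      (∀ a ∈ X₂, π a = a) → π • Q = Q)
    (hcol : ∀ c ∈ Set.range col, ∃ a, a ∉ X₁ ∪ X₂ ∧ col a = c) :
    ∀ π : Equiv.Perm α, (∀ a, col (π a) = col a) →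
      (∀ a ∈ X₁ ∩ X₂, π a = a) → π • Q = Q :=
  support_intersection_general col Q X₁ X₂ h₁ h₂ hcol
end

section
/- For any permutation π of the atoms (extended to hereditarily finite sets), any k-form φ, any groups H ⊆ G of permutations of atoms commuting with π's conjugation appropriately, and any k-molecule σ, we have π((φ,G,H) * σ) = (φ,G,H) * (π∘σ), provided π is an automorphism (colour-preserving) and πG = Gπ, πH = Hπ. -/
open scoped Classical

/-- An abstract model of hereditarily finite sets over a set `A` of atoms,
together with the extension of permutations of atoms to all objects. -/
structure HFModel (A : Type) : Type 1 where
  Obj : Type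
  atom : A → Obj
  mkSet : Finset Obj → Obj
  members : Obj → Finset Obj
  act : Equiv.Perm A → Obj → Obj
  atom_injective : Function.Injective atom
  atom_ne_mkSet : ∀ a s, atom a ≠ mkSet s
  members_mkSet : ∀ s, members (mkSet s) = s
  members_atom : ∀ a, members (atom a) = ∅
  atom_or_set : ∀ x, (∃ a, x = atom a) ∨ (∃ s, x = mkSet s)
  act_atom : ∀ π a, act π (atom a) = atom (π a)
  act_mkSet : ∀ π s, act π (mkSet s) = mkSet (s.image (act π))
  act_one : ∀ x, act 1 x = x
  act_mul : ∀ π ρ x, act (π * ρ) x = act π (act ρ x)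

/-- Abstract 2-configurations for `k`-molecules with colours in `κ`. -/
structure Config2 (k : ℕ) (κ : Type) : Type where
  rel : Fin k → Fin k → Bool
  col₁ : Fin k → κ
  col₂ : Fin k → κ

/-- The configuration of a pair of `k`-molecules. -/
def conf {A κ : Type} [DecidableEq A] {k : ℕ} (col : A → κ) (τ σ : Fin k → A) :
    Config2 k κ :=
  ⟨fun p q => decide (τ p = σ q), col ∘ τ, col ∘ σ⟩

/-- `k`-forms. -/
inductive Form (k : ℕ) (κ : Type) : Type where
  | atom : Fin k → Form k κ
  | set : List (Form k κ × Config2 k κ) → Form k κ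

/-- Evaluation `φ * σ` of a `k`-form on a `k`-molecule. -/
noncomputable def evalForm {A κ : Type} [DecidableEq A] [Fintype A] {k : ℕ}
    (M : HFModel A) (col : A → κ) : (Fin k → A) → Form k κ → M.Obj
  | σ, .atom p => M.atom (σ p)
  | σ, .set l =>
      M.mkSet <| (l.attach.map (fun x =>
        (Finset.univ.filter
            (fun τ : Fin k → A => Function.Injective τ ∧ conf col τ σ = x.1.2)).image
          (fun τ => evalForm M col τ x.1.1))).foldr (· ∪ ·) ∅
  termination_by σ φ => sizeOf φ
  decreasing_by
    obtain ⟨⟨φ', E'⟩, hmem⟩ := x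
    have h := List.sizeOf_lt_of_mem hmem
    simp at h ⊢
    omega

/-- The orbit `G x` of an object under a finite set of permutations, as an object. -/
noncomputable def orbitObj {A : Type} (M : HFModel A) (G : Finset (Equiv.Perm A))
    (x : M.Obj) : M.Obj :=
  M.mkSet (G.image (fun g => M.act g x))

/-- The object `⋃_{h ∈ H} φ * (h ∘ σ)`. -/
noncomputable def unionEval {A κ : Type} [DecidableEq A] [Fintype A] {k : ℕ}
    (M : HFModel A) (col : A → κ) (H : Finset (Equiv.Perm A)) (φ : Form k κ)
    (σ : Fin k → A) : M.Obj :=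
  M.mkSet (H.biUnion (fun h => M.members (evalForm M col (⇑h ∘ σ) φ)))

/-- The orbit-form evaluation `(φ,G,H) * σ = G(⋃_{h∈H} φ * hσ)`. -/
noncomputable def orbitEval {A κ : Type} [DecidableEq A] [Fintype A] {k : ℕ}
    (M : HFModel A) (col : A → κ) (φ : Form k κ) (G H : Finset (Equiv.Perm A))
    (σ : Fin k → A) : M.Obj :=
  orbitObj M G (unionEval M col H φ σ)

/-- A finite set of permutations forming a subgroup. -/
def IsSubgroupF {A : Type} (G : Finset (Equiv.Perm A)) : Prop :=
  (1 : Equiv.Perm A) ∈ G ∧ (∀ g ∈ G, g⁻¹ ∈ G) ∧ ∀ g ∈ G, ∀ h ∈ G, g * h ∈ G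

/-- Colour-preserving permutations (automorphisms). -/
def IsAut {A κ : Type} (col : A → κ) (π : Equiv.Perm A) : Prop :=
  ∀ a, col (π a) = col a

/-- `X` is a support of object `x`. -/
def SupportsObj {A κ : Type} (M : HFModel A) (col : A → κ) (X : Set A) (x : M.Obj) : Prop :=
  ∀ π : Equiv.Perm A, IsAut col π → (∀ a ∈ X, π a = a) → M.act π x = x

/-- Transitive-closure membership. -/
inductive InTC {A : Type} (M : HFModel A) : M.Obj → M.Obj → Prop where
  | mem {x y} : x ∈ M.members y → InTC M x y
  | trans {x z y} : x ∈ M.members z → InTC M z y → InTC M x y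

/-- `y` is a transitive set. -/
def TransitiveObj {A : Type} (M : HFModel A) (y : M.Obj) : Prop :=
  ∀ z ∈ M.members y, ∀ w ∈ M.members z, w ∈ M.members y

/-- `x` is `k`-skew-symmetric. -/
def SkewSym {A κ : Type} (M : HFModel A) (col : A → κ) (k : ℕ) (x : M.Obj) : Prop :=
  ∃ (G : Finset (Equiv.Perm A)) (y : M.Obj), IsSubgroupF G ∧ x = orbitObj M G y ∧
    TransitiveObj M y ∧
    ∀ z, (z = y ∨ InTC M z y) →
      ∃ X : Finset A, X.card ≤ k ∧ SupportsObj M col X (orbitObj M G z)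

/-!
A colour-preserving `π` maps the molecules `τ` with `conf(τ, σ) = E` bijectively onto those with
`conf(τ', πσ) = E`, so by induction on the form `π (φ * σ) = φ * (πσ)`. The union over `H` and the
orbit under `G` are then re-indexed by the conjugation `g ↦ π g π⁻¹`, which permutes `H` and `G`.
-/

section

variable {A κ : Type} {k : ℕ}

theorem conf_perm_comp [DecidableEq A] {col : A → κ} {π : Equiv.Perm A} (hπ : IsAut col π)
    (τ σ : Fin k → A) : conf col (⇑π ∘ τ) (⇑π ∘ σ) = conf col τ σ := by
  have hcol : col ∘ ⇑π = col := funext hπ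
  simp only [conf, Function.comp_apply, π.injective.eq_iff, ← Function.comp_assoc, hcol]

theorem filter_conf_perm_comp [DecidableEq A] [Fintype A] {col : A → κ} {π : Equiv.Perm A}
    (hπ : IsAut col π) (σ : Fin k → A) (E : Config2 k κ) :
    Finset.univ.filter (fun τ : Fin k → A => Function.Injective τ ∧ conf col τ (⇑π ∘ σ) = E)
      = (Finset.univ.filter
          (fun τ : Fin k → A => Function.Injective τ ∧ conf col τ σ = E)).image (⇑π ∘ ·) := by
  ext τ
  simp only [Finset.mem_filter, Finset.mem_univ, true_and, Finset.mem_image]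
  constructor
  · rintro ⟨hinj, hconf⟩
    have hτ : ⇑π ∘ (⇑π⁻¹ ∘ τ) = τ := by funext p; simp
    refine ⟨⇑π⁻¹ ∘ τ, ⟨π⁻¹.injective.comp hinj, ?_⟩, hτ⟩
    rw [← conf_perm_comp hπ, hτ, hconf]
  · rintro ⟨τ, ⟨hinj, hconf⟩, rfl⟩
    exact ⟨π.injective.comp hinj, by rw [conf_perm_comp hπ, hconf]⟩

theorem HFModel.members_act (M : HFModel A) (π : Equiv.Perm A) (x : M.Obj) :
    M.members (M.act π x) = (M.members x).image (M.act π) := by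
  rcases M.atom_or_set x with ⟨a, rfl⟩ | ⟨s, rfl⟩
  · rw [M.act_atom, M.members_atom, M.members_atom, Finset.image_empty]
  · rw [M.act_mkSet, M.members_mkSet, M.members_mkSet]

theorem Finset.image_foldr_union {β γ : Type*} [DecidableEq β] [DecidableEq γ]
    (f : β → γ) (L : List (Finset β)) :
    (L.foldr (· ∪ ·) ∅).image f = (L.map (·.image f)).foldr (· ∪ ·) ∅ := by
  induction L with
  | nil => simp
  | cons a L ih => simp [Finset.image_union, ih]

theorem Finset.image_conj_eq_self {G : Type*} [Group G] [DecidableEq G] {S : Finset G} {π : G}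
    (hS : ∀ g ∈ S, π * g * π⁻¹ ∈ S) : S.image (fun g => π * g * π⁻¹) = S :=
  Finset.eq_of_subset_of_card_le (Finset.image_subset_iff.mpr hS)
    (Finset.card_image_of_injective _ fun _ _ h => mul_left_cancel (mul_right_cancel h)).ge

theorem act_evalForm [DecidableEq A] [Fintype A] (M : HFModel A) {col : A → κ}
    {π : Equiv.Perm A} (hπ : IsAut col π) (σ : Fin k → A) : ∀ φ : Form k κ,
      M.act π (evalForm M col σ φ) = evalForm M col (⇑π ∘ σ) φ
  | .atom p => by simp [evalForm, M.act_atom]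
  | .set l => by
      rw [evalForm, evalForm, M.act_mkSet, Finset.image_foldr_union, List.map_map]
      congr 2
      refine List.map_congr_left fun ⟨⟨φ, E⟩, hmem⟩ _ => ?_
      rw [Function.comp_apply, Finset.image_image, filter_conf_perm_comp hπ, Finset.image_image]
      exact Finset.image_congr fun τ _ => act_evalForm M hπ τ φ
  termination_by φ => sizeOf φ
  decreasing_by
    have := List.sizeOf_lt_of_mem hmem
    simp only [Prod.mk.sizeOf_spec, Form.set.sizeOf_spec] at this ⊢
    omega

theorem act_orbitObj (M : HFModel A) {G : Finset (Equiv.Perm A)} {π : Equiv.Perm A}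
    (hG : ∀ g ∈ G, π * g * π⁻¹ ∈ G) (x : M.Obj) :
    M.act π (orbitObj M G x) = orbitObj M G (M.act π x) := by
  rw [orbitObj, orbitObj, M.act_mkSet, Finset.image_image]
  conv_rhs => rw [← Finset.image_conj_eq_self hG, Finset.image_image]
  refine congrArg M.mkSet (Finset.image_congr fun g _ => ?_)
  simp only [Function.comp_apply, ← M.act_mul]
  group

theorem act_unionEval [DecidableEq A] [Fintype A] (M : HFModel A) {col : A → κ}
    {π : Equiv.Perm A} (hπ : IsAut col π) {H : Finset (Equiv.Perm A)}
    (hH : ∀ h ∈ H, π * h * π⁻¹ ∈ H) (φ : Form k κ) (σ : Fin k → A) :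
    M.act π (unionEval M col H φ σ) = unionEval M col H φ (⇑π ∘ σ) := by
  have hconj (h : Equiv.Perm A) : ⇑π ∘ (⇑h ∘ σ) = ⇑(π * h * π⁻¹) ∘ (⇑π ∘ σ) := by
    funext p; simp
  rw [unionEval, unionEval, M.act_mkSet, Finset.biUnion_image]
  conv_rhs => rw [← Finset.image_conj_eq_self hH, Finset.image_biUnion]
  refine congrArg M.mkSet (Finset.biUnion_congr rfl fun h _ => ?_)
  rw [← M.members_act, act_evalForm M hπ, hconj]

end

theorem equivariance_of_orbit_form_evaluation_general
    {A κ : Type} [DecidableEq A] [Fintype A] {k : ℕ}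
    (M : HFModel A) (col : A → κ) (π : Equiv.Perm A) (hπ : IsAut col π)
    (G H : Finset (Equiv.Perm A))
    (hGcomm : ∀ g ∈ G, π * g * π⁻¹ ∈ G) (hHcomm : ∀ h ∈ H, π * h * π⁻¹ ∈ H)
    (φ : Form k κ) (σ : Fin k → A) :
    M.act π (orbitEval M col φ G H σ) = orbitEval M col φ G H (⇑π ∘ σ) := by
  rw [orbitEval, orbitEval, act_orbitObj M hGcomm, act_unionEval M hπ hHcomm]

/-- Equivariance of orbit-form evaluation under automorphisms:
`π((φ,G,H) * σ) = (φ,G,H) * (π ∘ σ)`. -/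
theorem equivariance_of_orbit_form_evaluation
    {A κ : Type} [DecidableEq A] [Fintype A] {k : ℕ}
    (M : HFModel A) (col : A → κ) (π : Equiv.Perm A) (hπ : IsAut col π)
    (G H : Finset (Equiv.Perm A)) (hGgrp : IsSubgroupF G) (hHgrp : IsSubgroupF H)
    (hHG : H ⊆ G)
    (hGcomm : ∀ g ∈ G, π * g * π⁻¹ ∈ G) (hHcomm : ∀ h ∈ H, π * h * π⁻¹ ∈ H)
    (φ : Form k κ) (σ : Fin k → A) (hσ : Function.Injective σ) :
    M.act π (orbitEval M col φ G H σ) = orbitEval M col φ G H (⇑π ∘ σ) :=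
  equivariance_of_orbit_form_evaluation_general M col π hπ G H hGcomm hHcomm φ σ
end

section
/- Let σ̄ = (σ₁,…,σ_ℓ) and τ̄ = (τ₁,…,τ_ℓ) be sequences of k-molecules over atom sets I and J respectively, with ℓ < m and |I|, |J| ≥ km, with each colour sufficiently large. If conf(σ̄) = conf(τ̄) and σ₀ is another k-molecule over I, then there exists a k-molecule τ₀ over J with conf(σ₀,σ̄) = conf(τ₀,τ̄). -/
open scoped Classical

/-!
A configuration only records which positions carry equal atoms and the colours of the atoms,
so the given configurations identify `σb i q` with `τb i q` by a well-defined, injective,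
colour-preserving partial map from `I` to `J`. Every atom of `σ0` already in its domain is
sent along it; the remaining positions receive pairwise distinct atoms of the right colour
outside the at most `ℓ k` atoms used by `τb`, which exist because every colour class of `J`
has at least `k m ≥ ℓ k + k` atoms.
-/

open Function

theorem conf_eq_conf_iff {A B κ : Type} [DecidableEq A] [DecidableEq B] {k : ℕ}
    {colA : A → κ} {colB : B → κ} {σ σ' : Fin k → A} {τ τ' : Fin k → B} :
    conf colA σ σ' = conf colB τ τ' ↔
      (∀ p q, σ p = σ' q ↔ τ p = τ' q) ∧ (∀ p, colA (σ p) = colB (τ p)) ∧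
        ∀ q, colA (σ' q) = colB (τ' q) := by
  simp only [conf, Config2.mk.injEq, funext_iff, comp_apply, decide_eq_decide]

theorem Finset.exists_injective_mem_of_card_le {α β : Type} [Fintype α] [DecidableEq β]
    (s : α → Finset β) (hs : ∀ a, Fintype.card α ≤ (s a).card) :
    ∃ f : α → β, Injective f ∧ ∀ a, f a ∈ s a := by
  refine (Finset.all_card_le_biUnion_card_iff_exists_injective s).mp fun t => ?_
  rcases t.eq_empty_or_nonempty with rfl | ⟨a, ha⟩
  · simp
  · calc t.card ≤ Fintype.card α := t.card_le_univ
      _ ≤ (s a).card := hs a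
      _ ≤ (t.biUnion s).card := Finset.card_le_card (Finset.subset_biUnion_of_mem s ha)

theorem exists_injective_notMem_col_eq {J κ : Type} [Fintype J] [DecidableEq J] {k : ℕ}
    (colJ : J → κ) (U : Finset J) (c : Fin k → κ)
    (hc : ∀ p, U.card + k ≤ (Finset.univ.filter fun a => colJ a = c p).card) :
    ∃ f : Fin k → J, Injective f ∧ ∀ p, f p ∉ U ∧ colJ (f p) = c p := by
  obtain ⟨f, hf, hmem⟩ := Finset.exists_injective_mem_of_card_le
    (fun p => (Finset.univ.filter fun a => colJ a = c p) \ U) fun p => by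
      have := Finset.le_card_sdiff U (Finset.univ.filter fun a => colJ a = c p)
      have := hc p
      simp only [Fintype.card_fin]
      omega
  exact ⟨f, hf, fun p => by simpa [and_comm] using hmem p⟩

section Transfer

variable {ι I J κ : Type} {k : ℕ} {colI : I → κ} {colJ : J → κ} {σ : ι → I} {τ : ι → J}

noncomputable def transfer (σ : ι → I) (τ : ι → J) (σ0 : Fin k → I) (f : Fin k → J) :
    Fin k → J :=
  fun p => if h : ∃ x, σ x = σ0 p then τ h.choose else f p

variable (hrel : ∀ x y, σ x = σ y ↔ τ x = τ y) {σ0 : Fin k → I} {f : Fin k → J}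
include hrel

theorem transfer_eq_iff (hfresh : ∀ p, f p ∉ Set.range τ) (p : Fin k) (y : ι) :
    transfer σ τ σ0 f p = τ y ↔ σ0 p = σ y := by
  unfold transfer
  split_ifs with h
  · rw [← hrel, h.choose_spec]
  · exact ⟨fun hy => (hfresh p ⟨y, hy.symm⟩).elim, fun hy => (h ⟨y, hy.symm⟩).elim⟩

theorem transfer_injective (hσ0 : Injective σ0) (hf : Injective f)
    (hfresh : ∀ p, f p ∉ Set.range τ) : Injective (transfer σ τ σ0 f) := by
  have of_mem_range : ∀ p p', (∃ x, σ x = σ0 p) →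
      transfer σ τ σ0 f p = transfer σ τ σ0 f p' → p = p' := by
    rintro p p' h he
    have hp : transfer σ τ σ0 f p = τ h.choose := dif_pos h
    rw [hp, eq_comm, transfer_eq_iff hrel hfresh, h.choose_spec] at he
    exact (hσ0 he).symm
  intro p p' he
  by_cases h : ∃ x, σ x = σ0 p
  · exact of_mem_range p p' h he
  by_cases h' : ∃ x, σ x = σ0 p'
  · exact (of_mem_range p' p h' he.symm).symm
  · unfold transfer at he
    rw [dif_neg h, dif_neg h'] at he
    exact hf he

omit hrel in
theorem col_transfer (hcol : ∀ x, colI (σ x) = colJ (τ x))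
    (hfcol : ∀ p, colI (σ0 p) = colJ (f p)) (p : Fin k) :
    colI (σ0 p) = colJ (transfer σ τ σ0 f p) := by
  unfold transfer
  split_ifs with h
  · rw [← hcol, h.choose_spec]
  · exact hfcol p

end Transfer

theorem configuration_extension_general
    {κ I J : Type} [DecidableEq I] [DecidableEq J] [Fintype J]
    (k m ℓ : ℕ) (hℓ : ℓ < m)
    (colI : I → κ) (colJ : J → κ)
    (hJcol : ∀ c : κ, k * m ≤ (Finset.univ.filter (fun a : J => colJ a = c)).card)
    (σb : Fin ℓ → Fin k → I) (τb : Fin ℓ → Fin k → J)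
    (hconf : ∀ i j, conf colI (σb i) (σb j) = conf colJ (τb i) (τb j))
    (σ0 : Fin k → I) (hσ0 : Function.Injective σ0) :
    ∃ τ0 : Fin k → J, Function.Injective τ0 ∧
      conf colI σ0 σ0 = conf colJ τ0 τ0 ∧
      (∀ j, conf colI σ0 (σb j) = conf colJ τ0 (τb j)) ∧
      (∀ j, conf colI (σb j) σ0 = conf colJ (τb j) τ0) := by
  let σ : Fin ℓ × Fin k → I := uncurry σb
  let τ : Fin ℓ × Fin k → J := uncurry τb
  have hrel : ∀ x y, σ x = σ y ↔ τ x = τ y := fun x y =>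
    (conf_eq_conf_iff.mp (hconf x.1 y.1)).1 _ _
  have hcol : ∀ x, colI (σ x) = colJ (τ x) := fun x =>
    (conf_eq_conf_iff.mp (hconf x.1 x.1)).2.1 _
  have hroom : ∀ p, (Finset.univ.image τ).card + k ≤
      (Finset.univ.filter fun a => colJ a = colI (σ0 p)).card := fun p => by
    have : (Finset.univ.image τ).card ≤ ℓ * k :=
      Finset.card_image_le.trans_eq (by simp)
    nlinarith [hJcol (colI (σ0 p))]
  obtain ⟨f, hf, hfresh⟩ := exists_injective_notMem_col_eq colJ _ _ hroom
  have hfresh' : ∀ p, f p ∉ Set.range τ := fun p => by simpa using (hfresh p).1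
  have heq := transfer_eq_iff hrel hfresh' (σ0 := σ0)
  have hcol₀ := col_transfer hcol fun p => (hfresh p).2.symm
  have hinj := transfer_injective hrel hσ0 hf hfresh'
  exact ⟨transfer σ τ σ0 f, hinj,
    conf_eq_conf_iff.mpr ⟨fun p q => hσ0.eq_iff.trans hinj.eq_iff.symm, hcol₀, hcol₀⟩,
    fun j => conf_eq_conf_iff.mpr ⟨fun p q => (heq p (j, q)).symm, hcol₀, fun q => hcol (j, q)⟩,
    fun j => conf_eq_conf_iff.mpr
      ⟨fun p q => eq_comm.trans ((heq q (j, p)).symm.trans eq_comm), fun q => hcol (j, q), hcol₀⟩⟩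

/-- Configuration extension lemma: if two sequences of `k`-molecules over atom sets
`I` and `J` have the same configuration, any further molecule over `I` can be matched
by one over `J`. -/
theorem configuration_extension
    {κ I J : Type} [DecidableEq I] [Fintype I] [DecidableEq J] [Fintype J]
    (k m ℓ : ℕ) (hℓ : ℓ < m)
    (colI : I → κ) (colJ : J → κ)
    (hI : k * m ≤ Fintype.card I) (hJ : k * m ≤ Fintype.card J)
    (hJcol : ∀ c : κ, k * m ≤ (Finset.univ.filter (fun a : J => colJ a = c)).card)
    (σb : Fin ℓ → Fin k → I) (τb : Fin ℓ → Fin k → J)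
    (hσinj : ∀ i, Function.Injective (σb i)) (hτinj : ∀ i, Function.Injective (τb i))
    (hconf : ∀ i j, conf colI (σb i) (σb j) = conf colJ (τb i) (τb j))
    (σ0 : Fin k → I) (hσ0 : Function.Injective σ0) :
    ∃ τ0 : Fin k → J, Function.Injective τ0 ∧
      conf colI σ0 σ0 = conf colJ τ0 τ0 ∧
      (∀ j, conf colI σ0 (σb j) = conf colJ τ0 (τb j)) ∧
      (∀ j, conf colI (σb j) σ0 = conf colJ (τb j) τ0) :=
  configuration_extension_general k m ℓ hℓ colI colJ hJcol σb τb hconf σ0 hσ0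
end

section
/- For every tuple length ℓ ≥ 2, and every ℓ-tuple ā of atoms represented as a hereditarily finite set via the iterated Kuratowski pairing, there is an m-form φ_ā (depending only on the equality pattern of ā, for m ≥ ℓ) and an m-molecule σ such that ā = φ_ā * σ. -/
/-!
Pick an injective molecule `σ` whose range contains the entries of `ā`, and indices `r` with
`σ ∘ r = ā`. Since the only injective `τ` with `conf(τ, σ) = conf(σ, σ)` is `σ` itself, a form
all of whose members are tagged with the diagonal configuration `E = conf(σ, σ)` evaluates at `σ`
like a plain set, so iterating the Kuratowski pairing at the level of forms yields `φ` with
`φ * σ = ā`. A tuple `b̄` with the same equality and colour pattern is `π ∘ ā` for a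
colour-preserving permutation `π`, and `conf(πσ, πσ) = E`, so the same `φ` evaluated at `πσ`
gives `b̄`.
-/

open scoped Classical

/-- Kuratowski pair `(x,y) = {{x},{x,y}}`. -/
noncomputable def kpair {A : Type} (M : HFModel A) (x y : M.Obj) : M.Obj :=
  M.mkSet {M.mkSet {x}, M.mkSet {x, y}}

/-- `ℓ`-tuples represented via iterated Kuratowski pairing. -/
noncomputable def tupleObj {A : Type} (M : HFModel A) :
    (ℓ : ℕ) → (Fin ℓ → M.Obj) → M.Obj
  | 0, _ => M.mkSet ∅
  | 1, f => f 0
  | (n + 2), f => kpair M (f 0) (tupleObj M (n + 1) (fun i => f i.succ))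

namespace IsAut

variable {A κ : Type} {col : A → κ}

theorem one : IsAut col (1 : Equiv.Perm A) := fun _ => rfl

theorem mul {π ρ : Equiv.Perm A} (hπ : IsAut col π) (hρ : IsAut col ρ) :
    IsAut col (π * ρ) := fun a => (hπ (ρ a)).trans (hρ a)

theorem swap [DecidableEq A] {x y : A} (h : col x = col y) : IsAut col (Equiv.swap x y) := by
  intro a
  rcases eq_or_ne a x with rfl | hx
  · simp [h]
  rcases eq_or_ne a y with rfl | hy
  · simp [h]
  · rw [Equiv.swap_apply_of_ne_of_ne hx hy]

end IsAut

theorem exists_isAut_comp_eq {A κ : Type} [DecidableEq A] (col : A → κ) :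
    ∀ {s : ℕ} (x y : Fin s → A), (∀ i j, x i = x j ↔ y i = y j) →
      (∀ i, col (x i) = col (y i)) → ∃ π : Equiv.Perm A, IsAut col π ∧ ⇑π ∘ x = y
  | 0, _, _, _, _ => ⟨1, IsAut.one, funext fun i => i.elim0⟩
  | s + 1, x, y, hpat, hcol => by
    obtain ⟨π, hπ, hπx⟩ := exists_isAut_comp_eq col (Fin.tail x) (Fin.tail y)
      (fun i j => hpat i.succ j.succ) (fun i => hcol i.succ)
    have htail (i : Fin s) : π (x i.succ) = y i.succ := congrFun hπx i
    by_cases hrep : ∃ j : Fin s, x 0 = x j.succ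
    · obtain ⟨j, hj⟩ := hrep
      refine ⟨π, hπ, funext fun i => Fin.cases ?_ htail i⟩
      rw [Function.comp_apply, hj, htail, ← (hpat 0 j.succ).mp hj]
    · push Not at hrep
      -- `x 0` is a new atom, so `π` may be corrected by a swap that fixes the images of the tail.
      refine ⟨Equiv.swap (y 0) (π (x 0)) * π,
        IsAut.mul (IsAut.swap (by rw [hπ, hcol 0])) hπ, funext fun i => Fin.cases ?_ (fun i => ?_) i⟩
      · simp
      · have hne₁ : y i.succ ≠ y 0 := fun he => hrep i ((hpat 0 i.succ).mpr he.symm)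
        have hne₂ : y i.succ ≠ π (x 0) := fun he => hrep i (π.injective (he ▸ htail i)).symm
        simp [htail, Equiv.swap_apply_of_ne_of_ne hne₁ hne₂]

theorem exists_injective_fin_forall_mem_range {A : Type} [Fintype A] {s m : ℕ}
    (a : Fin s → A) (hs : s ≤ m) (hm : m ≤ Fintype.card A) :
    ∃ σ : Fin m → A, Function.Injective σ ∧ ∀ i, a i ∈ Set.range σ := by
  obtain ⟨T, haT, -, hT⟩ :=
    Finset.exists_subsuperset_card_eq (Finset.subset_univ (Finset.univ.image a))
      (Finset.card_image_le.trans (by simpa using hs)) (by simpa using hm)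
  let e : Fin m ≃ T := (finCongr hT.symm).trans T.equivFin.symm
  refine ⟨fun j => e j, Subtype.coe_injective.comp e.injective, fun i => ?_⟩
  have hai : a i ∈ T := haT (Finset.mem_image_of_mem a (Finset.mem_univ i))
  exact ⟨e.symm ⟨a i, hai⟩, by simp⟩

theorem conf_comp_self {A κ : Type} [DecidableEq A] {col : A → κ} {π : Equiv.Perm A}
    (hπ : IsAut col π) {k : ℕ} (σ : Fin k → A) :
    conf col (⇑π ∘ σ) (⇑π ∘ σ) = conf col σ σ := by
  have hcol : col ∘ ⇑π ∘ σ = col ∘ σ := funext fun j => hπ (σ j)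
  simp [conf, hcol]

theorem eq_of_conf_eq_conf_self {A κ : Type} [DecidableEq A] {col : A → κ} {k : ℕ}
    {σ τ : Fin k → A} (h : conf col τ σ = conf col σ σ) : τ = σ :=
  funext fun p => by simpa [conf] using congrFun (congrFun (congrArg Config2.rel h) p) p

theorem filter_injective_conf_eq_conf_self {A κ : Type} [DecidableEq A] [Fintype A]
    (col : A → κ) {k : ℕ} {σ : Fin k → A} (hσ : Function.Injective σ) :
    Finset.univ.filter
      (fun τ : Fin k → A => Function.Injective τ ∧ conf col τ σ = conf col σ σ) = {σ} := by
  ext τ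
  simp only [Finset.mem_filter, Finset.mem_univ, true_and, Finset.mem_singleton]
  exact ⟨fun h => eq_of_conf_eq_conf_self h.2, by rintro rfl; exact ⟨hσ, rfl⟩⟩

namespace Form

variable {k : ℕ} {κ : Type}

def setWith (E : Config2 k κ) (l : List (Form k κ)) : Form k κ :=
  .set (l.map (·, E))

def kpair (E : Config2 k κ) (φ ψ : Form k κ) : Form k κ :=
  setWith E [setWith E [φ], setWith E [φ, ψ]]

def tuple (E : Config2 k κ) : (ℓ : ℕ) → (Fin ℓ → Form k κ) → Form k κ
  | 0, _ => setWith E []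
  | 1, f => f 0
  | (n + 2), f => kpair E (f 0) (tuple E (n + 1) (fun i => f i.succ))

end Form

section Eval

variable {A κ : Type} [DecidableEq A] [Fintype A] (M : HFModel A) (col : A → κ) {k : ℕ}

theorem evalForm_atom (σ : Fin k → A) (p : Fin k) :
    evalForm M col σ (.atom p) = M.atom (σ p) := by
  rw [evalForm]

theorem evalForm_setWith_conf_self {σ : Fin k → A} (hσ : Function.Injective σ)
    (l : List (Form k κ)) :
    evalForm M col σ (Form.setWith (conf col σ σ) l) =
      M.mkSet (l.map (evalForm M col σ)).toFinset := by
  rw [Form.setWith, evalForm]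
  congr 1
  have hconf : ∀ x ∈ (l.map (·, conf col σ σ)).attach, x.1.2 = conf col σ σ := by
    rintro ⟨x, hx⟩ -
    obtain ⟨φ, -, rfl⟩ := List.mem_map.mp hx
    rfl
  rw [List.map_congr_left fun x hx => by
      rw [hconf x hx, filter_injective_conf_eq_conf_self col hσ, Finset.image_singleton],
    List.attach_map_val
      (f := fun y : Form k κ × Config2 k κ => ({evalForm M col σ y.1} : Finset M.Obj))]
  clear hconf
  simp only [List.map_map, Function.comp_def]
  induction l with
  | nil => rfl
  | cons φ l ih => simp [ih]

theorem evalForm_kpair_conf_self {σ : Fin k → A} (hσ : Function.Injective σ)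
    (φ ψ : Form k κ) :
    evalForm M col σ (Form.kpair (conf col σ σ) φ ψ) =
      kpair M (evalForm M col σ φ) (evalForm M col σ ψ) := by
  simp [Form.kpair, evalForm_setWith_conf_self M col hσ, kpair]

theorem evalForm_tuple_conf_self {σ : Fin k → A} (hσ : Function.Injective σ) :
    ∀ (ℓ : ℕ) (f : Fin ℓ → Form k κ),
      evalForm M col σ (Form.tuple (conf col σ σ) ℓ f) =
        tupleObj M ℓ (fun i => evalForm M col σ (f i))
  | 0, _ => by simp [Form.tuple, evalForm_setWith_conf_self M col hσ, tupleObj]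
  | 1, _ => rfl
  | n + 2, f => by
    rw [Form.tuple, evalForm_kpair_conf_self M col hσ, evalForm_tuple_conf_self hσ (n + 1)]
    rfl

end Eval

/-- Every tuple of atoms (as a hereditarily finite set via Kuratowski pairing) is of
the form `φ * σ` for an `m`-form depending only on the equality/colour pattern of the
tuple, and an `m`-molecule. -/
theorem tuple_representation
    {A κ : Type} [DecidableEq A] [Fintype A]
    (M : HFModel A) (col : A → κ) (n m : ℕ)
    (hm : n + 2 ≤ m) (hA : m ≤ Fintype.card A)
    (a : Fin (n + 2) → A) :
    ∃ (φ : Form m κ) (σ : Fin m → A), Function.Injective σ ∧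
      evalForm M col σ φ = tupleObj M (n + 2) (fun i => M.atom (a i)) ∧
      ∀ b : Fin (n + 2) → A,
        (∀ i j, a i = a j ↔ b i = b j) → (∀ i, col (a i) = col (b i)) →
        ∃ σ' : Fin m → A, Function.Injective σ' ∧
          evalForm M col σ' φ = tupleObj M (n + 2) (fun i => M.atom (b i)) := by
  obtain ⟨σ, hσ, hrange⟩ := exists_injective_fin_forall_mem_range a hm hA
  choose r hr using hrange
  set φ := Form.tuple (conf col σ σ) (n + 2) (Form.atom ∘ r) with hφ
  have heval (π : Equiv.Perm A) (hπ : IsAut col π) :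
      evalForm M col (⇑π ∘ σ) φ = tupleObj M (n + 2) (fun i => M.atom (π (a i))) := by
    rw [hφ, ← conf_comp_self hπ σ, evalForm_tuple_conf_self M col (π.injective.comp hσ)]
    simp [evalForm_atom, hr]
  refine ⟨φ, σ, hσ, by simpa using heval 1 IsAut.one, fun b hpat hcol => ?_⟩
  obtain ⟨π, hπ, rfl⟩ := exists_isAut_comp_eq col a b hpat hcol
  exact ⟨⇑π ∘ σ, π.injective.comp hσ, heval π hπ⟩
end
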